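/- Let f be a nonnegative k-submodular function with f(0) = 0 and let (e_1,i_1),…,(e_t,i_t) be an LAA run. Let T ∈ {0,…,t} be such that c(x_T) ≤ B and c(x_T) ≥ c(x_j) for every j ∈ {0,…,t} with c(x_j) ≤ B, and set x' = x_T. Let o be a k-set with c(o) ≤ B such that for every e ∈ supp(o) \ supp(x^t) and every i ∈ {1,…,k}, Δ_{(e,i)}f(x^t) ≤ c(e)·f(x^t)/B. Then f(x') ≥ f(o)/18. -/

import Mathlib

/-
Along the run, replacing `o` by `o^j` (`o` overwritten by `x^j`) costs at most twice the gain
`f(x^{j+1}) - f(x^j)`: removing `e_j` from `o^j` and comparing the position `o(e_j)` with the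
greedy position `i_j` uses pairwise monotonicity at the removed set and orthant submodularity
against `x^j`. Telescoping gives `f(o) ≤ f(o^t) + 2 f(x^t)`, and the density condition on `o`,
summed over `supp o \ supp x^t`, gives `f(o^t) ≤ (1 + c(o)/B) f(x^t) ≤ 2 f(x^t)`.

If the whole run is feasible, `x' = x^t`. Otherwise the suffix one step longer than `x'` is
infeasible and adds one element of cost at most `B/2`, so `c(x') > B/2`. By condition (ii) the
prefix `x^{t-T}` grows by the factor `1 + c(x')/B > 3/2` up to `x^t`, while `x^t` is the
disjoint union of `x^{t-T}` and `x'`, so `f(x^t) ≤ f(x^{t-T}) + f(x') ≤ (2/3) f(x^t) + f(x')`.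
Hence `f(x^t) ≤ 3 f(x')` and `f(o) ≤ 12 f(x')`.
-/

/-- The meet `x ⊓ y` of two `k`-sets, with components `Xᵢ ∩ Yᵢ`. -/
def sqcap {V : Type*} (x y : V → ℕ) : V → ℕ :=
  fun e => if x e = y e then x e else 0

/-- The join `x ⊔ y` of two `k`-sets, with components
`Zᵢ = (Xᵢ ∪ Yᵢ) \ ⋃_{j ≠ i} (Xⱼ ∪ Yⱼ)`. -/
def sqcup {V : Type*} (x y : V → ℕ) : V → ℕ :=
  fun e =>
    if x e = 0 then y e
    else if y e = 0 then x e
    else if x e = y e then x e else 0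

/-- A `k`-set: every element gets a position in `{0, 1, …, k}`
(`0` meaning unselected). -/
def IsKSet {V : Type*} (k : ℕ) (x : V → ℕ) : Prop := ∀ e, x e ≤ k

/-- `x ⊑ y`: every component of `x` is contained in the corresponding
component of `y`. -/
def KLE {V : Type*} (x y : V → ℕ) : Prop := ∀ e, x e ≠ 0 → y e = x e

/-- The singleton `k`-set `(e, i)`. -/
def singl {V : Type*} [DecidableEq V] (e : V) (i : ℕ) : V → ℕ :=
  fun e' => if e' = e then i else 0

/-- `k`-submodularity: `f x + f y ≥ f (x ⊓ y) + f (x ⊔ y)` for all `k`-sets. -/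
def KSubmodular {V : Type*} (k : ℕ) (f : (V → ℕ) → ℝ) : Prop :=
  ∀ x y : V → ℕ, IsKSet k x → IsKSet k y →
    f x + f y ≥ f (sqcap x y) + f (sqcup x y)

/-- The marginal gain `Δ_{(e,i)} f(x) = f (x ⊔ (e,i)) - f x`. -/
def marg {V : Type*} [DecidableEq V] (f : (V → ℕ) → ℝ) (e : V) (i : ℕ)
    (x : V → ℕ) : ℝ :=
  f (sqcup x (singl e i)) - f x

/-- The cost of a `k`-set: the total cost of its support. -/
noncomputable def cost {V : Type*} [Fintype V] (c : V → ℝ) (x : V → ℕ) : ℝ :=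
  ∑ e ∈ Finset.univ.filter (fun e => x e ≠ 0), c e

open Finset Function

section KSet

variable {V : Type*} {k : ℕ} {f : (V → ℕ) → ℝ}

lemma KSubmodular.le_add_of_disjoint (hsub : KSubmodular k f) (hf0 : f (fun _ => 0) = 0)
    {u w : V → ℕ} (hu : IsKSet k u) (hw : IsKSet k w) (hdisj : ∀ v, u v = 0 ∨ w v = 0) :
    f (sqcup u w) ≤ f u + f w := by
  have hcap : sqcap u w = fun _ => 0 := by
    funext v
    rcases hdisj v with h | h <;> simp [sqcap, h]
  have key := hsub u w hu hw
  rw [hcap, hf0] at key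
  linarith

variable [DecidableEq V]

lemma sqcup_singl_eq_update {z : V → ℕ} {a : V} (hza : z a = 0) (i : ℕ) :
    sqcup z (singl a i) = update z a i := by
  funext v
  by_cases hv : v = a
  · subst hv; simp [sqcup, singl, hza]
  · by_cases hzv : z v = 0 <;> simp [sqcup, singl, hv, hzv]

lemma IsKSet.update {i : ℕ} {z : V → ℕ} (hz : IsKSet k z) (a : V) (hi : i ≤ k) :
    IsKSet k (update z a i) := by
  intro v
  by_cases hv : v = a
  · subst hv; simpa using hi
  · simpa [hv] using hz v

lemma KSubmodular.marg_add_marg_nonneg (hsub : KSubmodular k f) {z : V → ℕ} (hz : IsKSet k z)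
    {a : V} (hza : z a = 0) {i j : ℕ} (hi : i ≠ 0) (hj : j ≠ 0) (hik : i ≤ k)
    (hjk : j ≤ k) (hij : i ≠ j) : 0 ≤ marg f a i z + marg f a j z := by
  have key := hsub _ _ (hz.update a hik) (hz.update a hjk)
  have hcap : sqcap (update z a i) (update z a j) = z := by
    funext v; by_cases hv : v = a
    · subst hv; simp [sqcap, hij, hza]
    · simp [sqcap, hv]
  have hcup : sqcup (update z a i) (update z a j) = z := by
    funext v; by_cases hv : v = a
    · subst hv; simp [sqcup, hi, hj, hij, hza]
    · by_cases hzv : z v = 0 <;> simp [sqcup, hv, hzv]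
  rw [hcap, hcup] at key
  simp only [marg, sqcup_singl_eq_update hza]
  linarith

lemma KSubmodular.marg_le_marg_of_kle (hsub : KSubmodular k f) {u z : V → ℕ}
    (hu : IsKSet k u) (hz : IsKSet k z) (huz : KLE u z) {a : V} (hza : z a = 0) {i : ℕ}
    (hi : i ≠ 0) (hik : i ≤ k) : marg f a i z ≤ marg f a i u := by
  have hua : u a = 0 := by
    by_contra h
    exact h ((huz a h).symm.trans hza)
  have key := hsub _ _ (hu.update a hik) hz
  have hcap : sqcap (update u a i) z = u := by
    funext v; by_cases hv : v = a
    · subst hv; simp [sqcap, hi, hza, hua]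
    · by_cases huv : u v = 0
      · simp [sqcap, hv, huv]
      · simp [sqcap, hv, huz v huv]
  have hcup : sqcup (update u a i) z = update z a i := by
    funext v; by_cases hv : v = a
    · subst hv; simp [sqcup, hi, hza]
    · by_cases huv : u v = 0
      · simp [sqcup, hv, huv]
      · simp [sqcup, hv, huv, huz v huv]
  rw [hcap, hcup] at key
  simp only [marg, sqcup_singl_eq_update hza, sqcup_singl_eq_update hua]
  linarith

end KSet

section Selects

variable {V : Type*}

/-- `y` is the `k`-set `{(a m, p m) : m ∈ s}`. The paper's `x^j` and `x_j` are the cases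
`s = range j` and `s = Ico (t - j) t`. -/
def Selects (y : V → ℕ) (a : ℕ → V) (p : ℕ → ℕ) (s : Finset ℕ) : Prop :=
  (∀ m ∈ s, y (a m) = p m) ∧ ∀ v, (∀ m ∈ s, a m ≠ v) → y v = 0

variable {y w : V → ℕ} {a : ℕ → V} {p : ℕ → ℕ} {s s' : Finset ℕ} {m : ℕ}

lemma Selects.isKSet {k : ℕ} (hy : Selects y a p s) (hp : ∀ m ∈ s, p m ≤ k) :
    IsKSet k y := by
  intro v
  by_cases hv : ∃ m ∈ s, a m = v
  · obtain ⟨m, hm, rfl⟩ := hv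
    exact (hy.1 m hm).trans_le (hp m hm)
  · push Not at hv
    simp [hy.2 v hv]

lemma Selects.eq (hy : Selects y a p s) (hw : Selects w a p s) : y = w := by
  funext v
  by_cases hv : ∃ m ∈ s, a m = v
  · obtain ⟨m, hm, rfl⟩ := hv
    rw [hy.1 m hm, hw.1 m hm]
  · push Not at hv
    rw [hy.2 v hv, hw.2 v hv]

lemma Selects.image {g : ℕ → ℕ} (hy : Selects y (a ∘ g) (p ∘ g) s) :
    Selects y a p (s.image g) := by
  refine ⟨?_, fun v hv => hy.2 v fun m hm => hv _ (mem_image_of_mem g hm)⟩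
  simp only [mem_image, forall_exists_index, and_imp]
  rintro _ m hm rfl
  exact hy.1 m hm

lemma Selects.apply_eq_zero (hy : Selects y a p s) (ha : Set.InjOn a (insert m s : Finset ℕ))
    (hm : m ∉ s) : y (a m) = 0 :=
  hy.2 _ fun m' hm' h => hm (ha (by simp [hm']) (by simp) h ▸ hm')

lemma Selects.apply_eq_zero_of_disjoint (hw : Selects w a p s')
    (ha : Set.InjOn a (s ∪ s' : Finset ℕ)) (hss' : Disjoint s s') (hm : m ∈ s) :
    w (a m) = 0 :=
  hw.apply_eq_zero
    (ha.mono (coe_subset.2 (insert_subset (mem_union_left _ hm) subset_union_right)))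
    (disjoint_left.1 hss' hm)

lemma Selects.disjoint (hy : Selects y a p s) (hw : Selects w a p s')
    (ha : Set.InjOn a (s ∪ s' : Finset ℕ)) (hss' : Disjoint s s') (v : V) :
    y v = 0 ∨ w v = 0 := by
  by_cases hv : ∃ m ∈ s, a m = v
  · obtain ⟨m, hm, rfl⟩ := hv
    exact Or.inr (hw.apply_eq_zero_of_disjoint ha hss' hm)
  · push Not at hv
    exact Or.inl (hy.2 v hv)

lemma Selects.sqcup (hy : Selects y a p s) (hw : Selects w a p s')
    (ha : Set.InjOn a (s ∪ s' : Finset ℕ)) (hss' : Disjoint s s') :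
    Selects (sqcup y w) a p (s ∪ s') := by
  refine ⟨fun m hm => ?_, fun v hv => ?_⟩
  · rcases mem_union.1 hm with hm | hm
    · have hw0 := hw.apply_eq_zero_of_disjoint ha hss' hm
      simp only [_root_.sqcup, hw0, hy.1 m hm]
      split_ifs <;> omega
    · have hy0 := hy.apply_eq_zero_of_disjoint (union_comm s s' ▸ ha) hss'.symm hm
      simp [_root_.sqcup, hy0, hw.1 m hm]
  · simp [_root_.sqcup, hy.2 v fun m hm => hv m (mem_union_left _ hm),
      hw.2 v fun m hm => hv m (mem_union_right _ hm)]

lemma KSubmodular.le_add_of_selects_range_Ico {k : ℕ} {f : (V → ℕ) → ℝ}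
    (hsub : KSubmodular k f) (hf0 : f (fun _ => 0) = 0) {u : V → ℕ} (hu : IsKSet k u)
    (hw : IsKSet k w) {n : ℕ} (hmn : m ≤ n) (ha : Set.InjOn a (range n))
    (hy : Selects y a p (range n)) (hus : Selects u a p (range m))
    (hws : Selects w a p (Ico m n)) : f y ≤ f u + f w := by
  have hunion : range m ∪ Ico m n = range n := by
    rw [← Nat.Ico_zero_eq_range, ← Nat.Ico_zero_eq_range,
      Ico_union_Ico_eq_Ico (Nat.zero_le _) hmn]
  have hdisj : Disjoint (range m) (Ico m n) := by
    rw [← Nat.Ico_zero_eq_range]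
    exact Ico_disjoint_Ico_consecutive 0 m n
  rw [← hunion] at ha hy
  rw [hy.eq (hus.sqcup hws ha hdisj)]
  exact hsub.le_add_of_disjoint hf0 hu hw (hus.disjoint hws ha hdisj)

lemma Selects.cost_eq [Fintype V] (c : V → ℝ) (hy : Selects y a p s) (ha : Set.InjOn a s)
    (hp : ∀ m ∈ s, p m ≠ 0) : cost c y = ∑ m ∈ s, c (a m) := by
  classical
  have hsupp : univ.filter (fun v => y v ≠ 0) = s.image a := by
    ext v
    simp only [mem_filter, mem_univ, true_and, mem_image]
    constructor
    · intro hv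
      by_contra h
      push Not at h
      exact hv (hy.2 v h)
    · rintro ⟨m, hm, rfl⟩
      rw [hy.1 m hm]
      exact hp m hm
  rw [cost, hsupp, sum_image ha]

variable [DecidableEq V]

lemma Selects.update (hy : Selects y a p s)
    (ha : Set.InjOn a (insert m s : Finset ℕ)) (hm : m ∉ s) :
    Selects (update y (a m) (p m)) a p (insert m s) := by
  refine ⟨?_, ?_⟩
  · intro m' hm'
    by_cases hmm : m' = m
    · subst hmm; simp
    · have hne : a m' ≠ a m := fun h => hmm (ha (mem_coe.2 hm') (by simp) h)
      rw [update_of_ne hne, hy.1 m' ((mem_insert.1 hm').resolve_left hmm)]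
  · intro v hv
    rw [update_of_ne (hv m (mem_insert_self m s)).symm]
    exact hy.2 v fun m' hm' => hv m' (mem_insert_of_mem hm')

lemma selects_of_run {n : ℕ} {x : ℕ → V → ℕ} (ha : Set.InjOn a (range n))
    (h0 : x 0 = fun _ => 0) (hsucc : ∀ j < n, x (j + 1) = sqcup (x j) (singl (a j) (p j))) :
    ∀ j ≤ n, Selects (x j) a p (range j) := by
  intro j
  induction j with
  | zero => exact fun _ => ⟨by simp, fun v _ => by simp [h0]⟩
  | succ j ih =>
    intro hj
    have ha' : Set.InjOn a (insert j (range j) : Finset ℕ) :=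
      ha.mono (by rw [← range_add_one]; exact coe_subset.2 (range_subset_range.2 hj))
    have hj' : j ∉ range j := by simp
    have hxj := ih (by omega)
    rw [hsucc j hj, sqcup_singl_eq_update (hxj.apply_eq_zero ha' hj'), range_add_one]
    exact hxj.update ha' hj'

lemma selects_Ico_of_reverse_run {n : ℕ} {y : ℕ → V → ℕ}
    (ha : Set.InjOn a (range n)) (h0 : y 0 = fun _ => 0)
    (hsucc : ∀ j < n, y (j + 1) = sqcup (y j) (singl (a (n - 1 - j)) (p (n - 1 - j)))) :
    ∀ j ≤ n, Selects (y j) a p (Ico (n - j) n) := by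
  have hrev : Set.InjOn (a ∘ fun i => n - 1 - i) (range n) := fun i hi i' hi' h => by
    simp only [coe_range, Set.mem_Iio] at hi hi'
    have := ha (by simp; omega) (by simp; omega) h
    dsimp only at this
    omega
  intro j hj
  have himage : (range j).image (fun i => n - 1 - i) = Ico (n - j) n := by
    ext m
    simp only [mem_image, mem_range, mem_Ico]
    exact ⟨by omega, fun hm => ⟨n - 1 - m, by omega, by omega⟩⟩
  rw [← himage]
  exact (selects_of_run hrev h0 hsucc j hj).image

end Selects

section Overwrite

variable {V : Type*}

/-- The paper's `o^j = (o ⊔ x^j) ⊔ x^j`, for `x = x^j`. -/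
def overwrite (o x : V → ℕ) : V → ℕ := sqcup (sqcup o x) x

lemma overwrite_apply (o x : V → ℕ) (v : V) :
    overwrite o x v = if x v = 0 then o v else x v := by
  by_cases hx : x v = 0
  · by_cases ho : o v = 0 <;> simp [overwrite, sqcup, hx, ho]
  · by_cases ho : o v = 0
    · simp [overwrite, sqcup, hx, ho]
    · by_cases hox : o v = x v <;> simp [overwrite, sqcup, hx, ho, hox]

lemma overwrite_zero (o : V → ℕ) : overwrite o (fun _ => 0) = o := by
  funext v; simp [overwrite_apply]

lemma IsKSet.overwrite {k : ℕ} {o x : V → ℕ} (ho : IsKSet k o) (hx : IsKSet k x) :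
    IsKSet k (overwrite o x) := by
  intro v
  rw [overwrite_apply]
  split_ifs
  exacts [ho v, hx v]

variable [DecidableEq V] {k : ℕ} {f : (V → ℕ) → ℝ} {o x : V → ℕ}

lemma overwrite_update {a : V} {i : ℕ} (hi : i ≠ 0) :
    overwrite o (update x a i) = update (overwrite o x) a i := by
  funext v
  by_cases hv : v = a
  · subst hv; simp [overwrite_apply, hi]
  · simp [overwrite_apply, hv]

lemma KSubmodular.overwrite_le (hk : 2 ≤ k) (hsub : KSubmodular k f) (ho : IsKSet k o)
    (hx : IsKSet k x) {a : V} (hxa : x a = 0) {i : ℕ} (hi : i ≠ 0) (hik : i ≤ k)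
    (hbest : ∀ l, 1 ≤ l → l ≤ k → marg f a l x ≤ marg f a i x)
    (hgain : 0 ≤ marg f a i x) :
    f (overwrite o x) ≤ f (overwrite o (sqcup x (singl a i))) + 2 * marg f a i x := by
  set z := update (overwrite o x) a 0
  have hz : IsKSet k z := (ho.overwrite hx).update a (Nat.zero_le k)
  have hza : z a = 0 := update_self ..
  have hxz : KLE x z := fun v hv => by
    have hva : v ≠ a := fun h => hv (by rwa [h])
    simp [z, hva, overwrite_apply, hv]
  have hnew : overwrite o (sqcup x (singl a i)) = sqcup z (singl a i) := by
    rw [sqcup_singl_eq_update hxa, overwrite_update hi, sqcup_singl_eq_update hza, update_idem]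
  have hold : overwrite o x = sqcup z (singl a (o a)) := by
    rw [sqcup_singl_eq_update hza, update_idem, eq_comm, update_eq_self_iff, overwrite_apply,
      if_pos hxa]
  have hother : ∀ l, l ≠ 0 → l ≤ k → l ≠ i →
      f z ≤ f (sqcup z (singl a i)) + marg f a i x ∧
      f (sqcup z (singl a l)) ≤ f (sqcup z (singl a i)) + 2 * marg f a i x := by
    intro l hl hlk hli
    have hpm := hsub.marg_add_marg_nonneg hz hza hi hl hik hlk hli.symm
    have horth := hsub.marg_le_marg_of_kle hx hz hxz hza hl hlk
    have hbl := hbest l (Nat.one_le_iff_ne_zero.2 hl) hlk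
    simp only [marg] at *
    constructor <;> linarith
  rw [hnew]
  by_cases hoa : o a = 0
  · have hzo : overwrite o x = z := by
      rw [hold, hoa, sqcup_singl_eq_update hza, update_eq_self_iff, hza]
    obtain ⟨l, hl, hlk, hli⟩ : ∃ l, l ≠ 0 ∧ l ≤ k ∧ l ≠ i :=
      if h : i = 1 then ⟨2, by omega⟩ else ⟨1, by omega⟩
    rw [hzo]
    linarith [(hother l hl hlk hli).1]
  · rw [hold]
    by_cases hoi : o a = i
    · rw [hoi]
      linarith
    · exact (hother (o a) hoa (ho a) hoi).2

lemma KSubmodular.overwrite_le_add_sum_marg [Fintype V] (hsub : KSubmodular k f)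
    (ho : IsKSet k o) (hx : IsKSet k x) :
    f (overwrite o x) ≤
      f x + ∑ v ∈ univ.filter (fun v => o v ≠ 0 ∧ x v = 0), marg f v (o v) x := by
  set D := univ.filter (fun v => o v ≠ 0 ∧ x v = 0)
  have hD : D.piecewise o x = overwrite o x := by
    funext v
    by_cases hxv : x v = 0
    · by_cases hov : o v = 0 <;> simp [D, overwrite_apply, hxv, hov]
    · simp [D, overwrite_apply, hxv]
  suffices h : ∀ S ⊆ D, f (S.piecewise o x) ≤ f x + ∑ v ∈ S, marg f v (o v) x by
    simpa [hD] using h D subset_rfl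
  intro S
  induction S using Finset.induction_on with
  | empty => simp
  | insert a S haS ih =>
    intro hSD
    obtain ⟨hoa, hxa⟩ : o a ≠ 0 ∧ x a = 0 := by simpa [D] using hSD (mem_insert_self a S)
    have hSD' : S ⊆ D := (subset_insert a S).trans hSD
    have hPa : S.piecewise o x a = 0 := by simp [haS, hxa]
    have hP : IsKSet k (S.piecewise o x) := fun v => by
      by_cases hv : v ∈ S <;> simp [hv, ho v, hx v]
    have hxP : KLE x (S.piecewise o x) := fun v hv => by
      have hvS : v ∉ S := fun h => by simpa [D, hv] using hSD' h
      simp [hvS]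
    have horth := hsub.marg_le_marg_of_kle hx hP hxP hPa hoa (ho a)
    have hstep : f ((insert a S).piecewise o x) =
        f (S.piecewise o x) + marg f a (o a) (S.piecewise o x) := by
      rw [marg, piecewise_insert, ← sqcup_singl_eq_update hPa]
      ring
    rw [hstep, sum_insert haS]
    linarith [ih hSD']

lemma KSubmodular.overwrite_le_two_mul [Fintype V] (hsub : KSubmodular k f)
    (ho : IsKSet k o) (hx : IsKSet k x) {c : V → ℝ} (hc : ∀ v, 0 ≤ c v) {B : ℝ}
    (hB : 0 < B) (hoB : cost c o ≤ B) (hfx : 0 ≤ f x)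
    (hsat : ∀ v, o v ≠ 0 → x v = 0 → marg f v (o v) x ≤ c v * f x / B) :
    f (overwrite o x) ≤ 2 * f x := by
  set D := univ.filter (fun v => o v ≠ 0 ∧ x v = 0)
  have hDo : ∑ v ∈ D, c v ≤ cost c o :=
    sum_le_sum_of_subset_of_nonneg (monotone_filter_right _ fun _ _ => And.left) fun v _ _ => hc v
  calc f (overwrite o x)
      ≤ f x + ∑ v ∈ D, marg f v (o v) x := hsub.overwrite_le_add_sum_marg ho hx
    _ ≤ f x + ∑ v ∈ D, c v * (f x / B) := by
        gcongr with v hv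
        rw [← mul_div_assoc]
        exact hsat v (mem_filter.1 hv).2.1 (mem_filter.1 hv).2.2
    _ ≤ f x + B * (f x / B) := by
        rw [← sum_mul]
        gcongr
        exact hDo.trans hoB
    _ = 2 * f x := by field_simp; ring

end Overwrite

lemma mul_one_add_sum_le {a d : ℕ → ℝ} {m n : ℕ} (hmn : m ≤ n) (ham : 0 ≤ a m)
    (hd : ∀ j, m ≤ j → j < n → 0 ≤ d j)
    (hstep : ∀ j, m ≤ j → j < n → a j * (1 + d j) ≤ a (j + 1)) :
    a m * (1 + ∑ j ∈ Ico m n, d j) ≤ a n := by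
  induction n, hmn using Nat.le_induction with
  | base => simp
  | succ n hmn ih =>
    have ih := ih (fun j h1 h2 => hd j h1 (by omega)) (fun j h1 h2 => hstep j h1 (by omega))
    have hS : 0 ≤ ∑ j ∈ Ico m n, d j :=
      sum_nonneg fun j hj => hd j (mem_Ico.1 hj).1 (Nat.lt_succ_of_lt (mem_Ico.1 hj).2)
    have hdn := hd n hmn (by omega)
    have hamn : a m ≤ a n := by nlinarith
    have := hstep n hmn (by omega)
    rw [sum_Ico_succ_top hmn]
    nlinarith

section Run

variable {V : Type*} {k : ℕ} {f : (V → ℕ) → ℝ}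

lemma KSubmodular.le_three_mul_of_max_suffix [Fintype V] (hsub : KSubmodular k f)
    (hnn : ∀ x : V → ℕ, IsKSet k x → 0 ≤ f x) (hf0 : f (fun _ => 0) = 0) {c : V → ℝ}
    (hc : ∀ v, 0 < c v) {B : ℝ} (hB : 0 < B) {t : ℕ} {e : ℕ → V} {pos : ℕ → ℕ}
    (he : Set.InjOn e (range t)) (hpos : ∀ j < t, 1 ≤ pos j ∧ pos j ≤ k)
    {x xs : ℕ → V → ℕ} (hx : ∀ j ≤ t, Selects (x j) e pos (range j))
    (hxk : ∀ j ≤ t, IsKSet k (x j))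
    (hxs : ∀ j ≤ t, Selects (xs j) e pos (Ico (t - j) t))
    (hgain : ∀ j < t, c (e j) * f (x j) / B ≤ f (x (j + 1)) - f (x j))
    (hlight : ∀ j < t, c (e j) ≤ B / 2) {T : ℕ} (hTt : T ≤ t)
    (hTmax : ∀ j ≤ t, cost c (xs j) ≤ B → cost c (xs j) ≤ cost c (xs T)) :
    f (x t) ≤ 3 * f (xs T) := by
  have htT : t - T ≤ t := Nat.sub_le t T
  have hxsk : IsKSet k (xs T) := (hxs T hTt).isKSet fun m hm => (hpos m (mem_Ico.1 hm).2).2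
  have hcost : ∀ j ≤ t, cost c (xs j) = ∑ i ∈ Ico (t - j) t, c (e i) := fun j hj =>
    (hxs j hj).cost_eq c (he.mono (by simp [Set.subset_def]))
      fun m hm => Nat.one_le_iff_ne_zero.1 (hpos m (mem_Ico.1 hm).2).1
  have hsplit : f (x t) ≤ f (x (t - T)) + f (xs T) :=
    hsub.le_add_of_selects_range_Ico hf0 (hxk _ htT) hxsk htT he (hx t le_rfl) (hx _ htT)
      (hxs T hTt)
  have hgrow : f (x (t - T)) * (1 + cost c (xs T) / B) ≤ f (x t) := by
    rw [hcost T hTt, sum_div]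
    refine mul_one_add_sum_le (a := fun j => f (x j)) htT (hnn _ (hxk _ htT))
      (fun j _ _ => div_nonneg (hc _).le hB.le) fun j _ hj => ?_
    have := hgain j hj
    rw [mul_comm, mul_div_assoc] at this
    linarith
  rcases hTt.lt_or_eq with hT | rfl
  · have hhalf : B / 2 < cost c (xs T) := by
      have hnext : cost c (xs (T + 1)) = c (e (t - 1 - T)) + cost c (xs T) := by
        rw [hcost _ hT, hcost _ hTt, sum_eq_sum_Ico_succ_bot (by omega),
          show t - (T + 1) + 1 = t - T by omega, show t - (T + 1) = t - 1 - T by omega]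
      by_contra hle
      by_cases hfeas : cost c (xs (T + 1)) ≤ B
      · linarith [hTmax (T + 1) hT hfeas, hc (e (t - 1 - T))]
      · linarith [hlight (t - 1 - T) (by omega)]
    have h32 : 3 / 2 ≤ 1 + cost c (xs T) / B := by
      rw [← sub_le_iff_le_add', le_div_iff₀ hB]
      linarith
    linarith [mul_le_mul_of_nonneg_left h32 (hnn _ (hxk _ htT))]
  · have hxsx : xs T = x T := (hxs T le_rfl).eq (by simpa using hx T le_rfl)
    rw [hxsx]
    linarith [hnn _ (hxk T le_rfl)]

variable [DecidableEq V]

lemma KSubmodular.le_overwrite_add_of_run (hk : 2 ≤ k) (hsub : KSubmodular k f)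
    (hf0 : f (fun _ => 0) = 0) {o : V → ℕ} (ho : IsKSet k o) {t : ℕ} {e : ℕ → V}
    {pos : ℕ → ℕ} (hpos : ∀ j < t, 1 ≤ pos j ∧ pos j ≤ k) {x : ℕ → V → ℕ}
    (hx0 : x 0 = fun _ => 0) (hxk : ∀ j ≤ t, IsKSet k (x j)) (hfresh : ∀ j < t, x j (e j) = 0)
    (hxsucc : ∀ j < t, x (j + 1) = sqcup (x j) (singl (e j) (pos j)))
    (hbest : ∀ j < t, ∀ l, 1 ≤ l → l ≤ k →
      f (sqcup (x j) (singl (e j) l)) ≤ f (sqcup (x j) (singl (e j) (pos j))))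
    (hgain : ∀ j < t, 0 ≤ marg f (e j) (pos j) (x j)) :
    f o ≤ f (overwrite o (x t)) + 2 * f (x t) := by
  suffices h : ∀ j ≤ t, f o ≤ f (overwrite o (x j)) + 2 * f (x j) from h t le_rfl
  intro j
  induction j with
  | zero => simp [hx0, overwrite_zero, hf0]
  | succ j ih =>
    intro hj
    have hstep := hsub.overwrite_le hk ho (hxk j (by omega)) (hfresh j hj)
      (by have := (hpos j hj).1; omega) (hpos j hj).2
      (fun l hl hlk => sub_le_sub_right (hbest j hj l hl hlk) _) (hgain j hj)
    rw [← hxsucc j hj, marg, ← hxsucc j hj] at hstep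
    linarith [ih (by omega)]

end Run

theorem stmt4_general {V : Type*} [Fintype V] [DecidableEq V]
    (k : ℕ) (hk : 2 ≤ k)
    (f : (V → ℕ) → ℝ)
    (hsub : KSubmodular k f)
    (hnn : ∀ x : V → ℕ, IsKSet k x → 0 ≤ f x)
    (hf0 : f (fun _ => 0) = 0)
    (c : V → ℝ) (hc : ∀ e, 0 < c e) (B : ℝ) (hB : 0 < B)
    (t : ℕ) (e : ℕ → V) (pos : ℕ → ℕ)
    (hdist : ∀ j₁ j₂, j₁ < t → j₂ < t → e j₁ = e j₂ → j₁ = j₂)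
    (hposk : ∀ j < t, 1 ≤ pos j ∧ pos j ≤ k)
    (x : ℕ → (V → ℕ))
    (hx0 : x 0 = fun _ => 0)
    (hxsucc : ∀ j < t, x (j + 1) = sqcup (x j) (singl (e j) (pos j)))
    (hbest : ∀ j < t, ∀ l, 1 ≤ l → l ≤ k →
      f (sqcup (x j) (singl (e j) l)) ≤ f (sqcup (x j) (singl (e j) (pos j))))
    (hgain : ∀ j < t, c (e j) * f (x j) / B ≤ marg f (e j) (pos j) (x j))
    (hlight : ∀ j < t, c (e j) ≤ B / 2)
    (xs : ℕ → (V → ℕ))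
    (hxs0 : xs 0 = fun _ => 0)
    (hxssucc : ∀ j < t, xs (j + 1) = sqcup (xs j) (singl (e (t - 1 - j)) (pos (t - 1 - j))))
    (T : ℕ) (hTt : T ≤ t)
    (hTmax : ∀ j ≤ t, cost c (xs j) ≤ B → cost c (xs j) ≤ cost c (xs T))
    (o : V → ℕ) (ho : IsKSet k o) (hoB : cost c o ≤ B)
    (hsat : ∀ e', o e' ≠ 0 → x t e' = 0 → ∀ i, 1 ≤ i → i ≤ k →
      marg f e' i (x t) ≤ c e' * f (x t) / B) :
    f o / 18 ≤ f (xs T) := by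
  have he : Set.InjOn e (range t) := fun j₁ h₁ j₂ h₂ =>
    hdist j₁ j₂ (mem_range.1 h₁) (mem_range.1 h₂)
  have hx := selects_of_run he hx0 hxsucc
  have hxk : ∀ j ≤ t, IsKSet k (x j) := fun j hj =>
    (hx j hj).isKSet fun m hm => (hposk m ((mem_range.1 hm).trans_le hj)).2
  have hfresh : ∀ j < t, x j (e j) = 0 := fun j hj =>
    (hx j hj.le).apply_eq_zero (he.mono (by simp [← range_add_one, Set.subset_def]; omega))
      notMem_range_self
  have hmarg : ∀ j < t, marg f (e j) (pos j) (x j) = f (x (j + 1)) - f (x j) := fun j hj => by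
    rw [marg, hxsucc j hj]
  have hgain0 : ∀ j < t, 0 ≤ marg f (e j) (pos j) (x j) := fun j hj =>
    (div_nonneg (mul_nonneg (hc _).le (hnn _ (hxk j hj.le))) hB.le).trans (hgain j hj)
  have hchain := hsub.le_overwrite_add_of_run hk hf0 ho hposk hx0 hxk hfresh hxsucc hbest hgain0
  have hsaturated := hsub.overwrite_le_two_mul ho (hxk t le_rfl) (fun v => (hc v).le) hB hoB
    (hnn _ (hxk t le_rfl)) fun v hov hxv =>
      hsat v hov hxv (o v) (Nat.one_le_iff_ne_zero.2 hov) (ho v)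
  have hsuffix := hsub.le_three_mul_of_max_suffix hnn hf0 hc hB he hposk hx hxk
    (selects_Ico_of_reverse_run he hxs0 hxssucc) (fun j hj => hmarg j hj ▸ hgain j hj) hlight hTt
    hTmax
  linarith [hnn _ (hxk t le_rfl)]

/-- combining the suffix selection with the density saturation of
`o`, the maximal-cost feasible suffix `x' = x_T` satisfies `f(x') ≥ f(o)/18`. -/
theorem stmt4 {V : Type*} [Fintype V] [DecidableEq V]
    (k : ℕ) (hk : 2 ≤ k)
    (f : (V → ℕ) → ℝ)
    (hsub : KSubmodular k f)
    (hnn : ∀ x : V → ℕ, IsKSet k x → 0 ≤ f x)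
    (hf0 : f (fun _ => 0) = 0)
    (c : V → ℝ) (hc : ∀ e, 0 < c e) (B : ℝ) (hB : 0 < B)
    (t : ℕ) (e : ℕ → V) (pos : ℕ → ℕ)
    (hdist : ∀ j₁ j₂, j₁ < t → j₂ < t → e j₁ = e j₂ → j₁ = j₂)
    (hposk : ∀ j < t, 1 ≤ pos j ∧ pos j ≤ k)
    (x : ℕ → (V → ℕ))
    (hx0 : x 0 = fun _ => 0)
    (hxsucc : ∀ j < t, x (j + 1) = sqcup (x j) (singl (e j) (pos j)))
    (hbest : ∀ j < t, ∀ l, 1 ≤ l → l ≤ k →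
      f (sqcup (x j) (singl (e j) l)) ≤ f (sqcup (x j) (singl (e j) (pos j))))
    (hgain : ∀ j < t, c (e j) * f (x j) / B ≤ marg f (e j) (pos j) (x j))
    (hlight : ∀ j < t, c (e j) ≤ B / 2)
    (xs : ℕ → (V → ℕ))
    (hxs0 : xs 0 = fun _ => 0)
    (hxssucc : ∀ j < t, xs (j + 1) = sqcup (xs j) (singl (e (t - 1 - j)) (pos (t - 1 - j))))
    (T : ℕ) (hTt : T ≤ t) (hTB : cost c (xs T) ≤ B)
    (hTmax : ∀ j ≤ t, cost c (xs j) ≤ B → cost c (xs j) ≤ cost c (xs T))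
    (o : V → ℕ) (ho : IsKSet k o) (hoB : cost c o ≤ B)
    (hsat : ∀ e', o e' ≠ 0 → x t e' = 0 → ∀ i, 1 ≤ i → i ≤ k →
      marg f e' i (x t) ≤ c e' * f (x t) / B) :
    f o / 18 ≤ f (xs T) :=
  stmt4_general k hk f hsub hnn hf0 c hc B hB t e pos hdist hposk x hx0 hxsucc hbest hgain hlight xs
    hxs0 hxssucc T hTt hTmax o ho hoB hsat
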